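/- Let V_t be the value-iteration iterates (V_0 ≡ 0, V_{t+1}(S) = c(S) + min{(K_0 V_t)(S), (K_1 V_t)(S)}) and define ΔV_t(S) = (K_1 V_t)(S) − (K_0 V_t)(S). Then for every t ≥ 0, every battery level e ∈ {0,...,E_max}, and every source state X ∈ {0,1}, one has ΔV_t(e, X, 0) ≥ 0; that is, when the VIA equals 0, not transmitting is an optimal action (since transmission only consumes energy without affecting the VIA). -/

import Mathlib

open Finset

namespace VIA

/-- The MDP state space: battery level, source state, VIA value. -/
abbrev State (Emax Dmax : ℕ) := Fin (Emax + 1) × Bool × Fin (Dmax + 1)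

/-- Deterministic next state given the action `a`, energy arrival `b`,
source-flip indicator `f`, and channel-success indicator `h`. -/
def nextState (Emax Dmax : ℕ) (s : State Emax Dmax) (a b f h : Bool) :
    State Emax Dmax :=
  let act : Bool := a && decide (0 < s.1.val)
  -- a successful transmission requires transmitting and channel success
  let succ : Bool := act && h
  (⟨min (s.1.val + (if b then 1 else 0) - (if act then 1 else 0)) Emax,
      Nat.lt_succ_of_le (min_le_right _ _)⟩,
   (if f then !s.2.1 else s.2.1),
   ⟨min (if succ then (if f then 1 else 0)
         else (if f then s.2.2.val + 1 else s.2.2.val)) Dmax,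
      Nat.lt_succ_of_le (min_le_right _ _)⟩)

/-- Bernoulli weight: probability `x` for `true`, `1 - x` for `false`. -/
def bern (x : ℝ) : Bool → ℝ := fun b => if b then x else 1 - x

/-- The transition kernel `K_a(s, s')` of the MDP, for action `a`
(`a = true` means transmit).  The source flips with probability `p`
from state `0 = false` and with probability `q` from state `1 = true`;
energy arrives with probability `β`; a transmission succeeds with
probability `ps`. -/
def K (Emax Dmax : ℕ) (p q β ps : ℝ) (a : Bool) (s s' : State Emax Dmax) : ℝ :=
  ∑ b : Bool, ∑ f : Bool, ∑ h : Bool,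
    bern β b * bern (if s.2.1 then q else p) f * bern ps h *
      (if nextState Emax Dmax s a b f h = s' then 1 else 0)

/-- The per-stage cost: the VIA value. -/
def cost (Emax Dmax : ℕ) (s : State Emax Dmax) : ℝ := s.2.2.val

/-- `(K_a V)(s) = ∑_{s'} K_a(s,s') V(s')`. -/
def KV (Emax Dmax : ℕ) (p q β ps : ℝ) (a : Bool) (V : State Emax Dmax → ℝ)
    (s : State Emax Dmax) : ℝ :=
  ∑ s' : State Emax Dmax, K Emax Dmax p q β ps a s s' * V s'

/-- Value iteration: `V_0 ≡ 0`,
`V_{t+1}(s) = c(s) + min{(K_0 V_t)(s), (K_1 V_t)(s)}`. -/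
def Viter (Emax Dmax : ℕ) (p q β ps : ℝ) : ℕ → State Emax Dmax → ℝ
  | 0 => fun _ => 0
  | t + 1 => fun s =>
      cost Emax Dmax s +
        min (KV Emax Dmax p q β ps false (Viter Emax Dmax p q β ps t) s)
            (KV Emax Dmax p q β ps true (Viter Emax Dmax p q β ps t) s)

/-- `ΔV_t(s) = (K_1 V_t)(s) − (K_0 V_t)(s)`. -/
def dV (Emax Dmax : ℕ) (p q β ps : ℝ) (t : ℕ) (s : State Emax Dmax) : ℝ :=
  KV Emax Dmax p q β ps true (Viter Emax Dmax p q β ps t) s -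
    KV Emax Dmax p q β ps false (Viter Emax Dmax p q β ps t) s

/-!
Couple the two actions through the same energy arrival, source flip and channel outcome. When
the VIA is `0`, a successful transmission only resets a VIA that a failed one leaves unchanged,
so both actions lead to the same next source state and VIA, and transmitting merely leaves at
most as much energy. It therefore suffices that every value-iteration iterate is antitone in the
battery level, which follows by induction on `t` with the same coupling, now comparing equal
actions taken from two battery levels.
-/
variable {Emax Dmax : ℕ} {p q β ps : ℝ}

def AntitoneInBattery (V : State Emax Dmax → ℝ) : Prop :=
  ∀ ⦃e₁ e₂ : Fin (Emax + 1)⦄ (x : Bool × Fin (Dmax + 1)), e₁ ≤ e₂ → V (e₂, x) ≤ V (e₁, x)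

lemma bern_nonneg {x : ℝ} (hx : x ∈ Set.Icc 0 1) (b : Bool) : 0 ≤ bern x b := by
  cases b <;> simp [bern, hx.1, hx.2]

lemma KV_eq_sum_nextState (a : Bool) (V : State Emax Dmax → ℝ) (s : State Emax Dmax) :
    KV Emax Dmax p q β ps a V s =
      ∑ b : Bool, ∑ f : Bool, ∑ h : Bool,
        bern β b * bern (if s.2.1 then q else p) f * bern ps h *
          V (nextState Emax Dmax s a b f h) := by
  simp only [KV, K, Finset.sum_mul]
  rw [Finset.sum_comm]
  refine Finset.sum_congr rfl fun b _ => ?_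
  rw [Finset.sum_comm]
  refine Finset.sum_congr rfl fun f _ => ?_
  rw [Finset.sum_comm]
  refine Finset.sum_congr rfl fun h _ => ?_
  simp [mul_ite]

lemma KV_le_KV_of_forall_nextState_le (hp : p ∈ Set.Icc 0 1) (hq : q ∈ Set.Icc 0 1)
    (hβ : β ∈ Set.Icc 0 1) (hps : ps ∈ Set.Icc 0 1) {a a' : Bool} {V W : State Emax Dmax → ℝ}
    {s s' : State Emax Dmax} (hX : s.2.1 = s'.2.1)
    (hle : ∀ b f h, V (nextState Emax Dmax s a b f h) ≤ W (nextState Emax Dmax s' a' b f h)) :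
    KV Emax Dmax p q β ps a V s ≤ KV Emax Dmax p q β ps a' W s' := by
  rw [KV_eq_sum_nextState, KV_eq_sum_nextState, ← hX]
  gcongr with b _ f _ h _
  · have hr : (if s.2.1 then q else p) ∈ Set.Icc 0 1 := by split_ifs <;> assumption
    exact mul_nonneg (mul_nonneg (bern_nonneg hβ b) (bern_nonneg hr f)) (bern_nonneg hps h)
  · exact hle b f h

lemma nextState_eq_of_fst_eq_zero (s : State Emax Dmax) (hs : s.1.val = 0) (b f h : Bool) :
    nextState Emax Dmax s true b f h = nextState Emax Dmax s false b f h := by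
  simp [nextState, hs]

lemma KV_true_eq_KV_false_of_fst_eq_zero (V : State Emax Dmax → ℝ) (s : State Emax Dmax)
    (hs : s.1.val = 0) :
    KV Emax Dmax p q β ps true V s = KV Emax Dmax p q β ps false V s := by
  simp only [KV_eq_sum_nextState, nextState_eq_of_fst_eq_zero s hs]

lemma nextState_snd_eq_and_fst_mono {e₁ e₂ : Fin (Emax + 1)} (x : Bool × Fin (Dmax + 1))
    (he : e₁ ≤ e₂) {a : Bool} (ha : a = false ∨ 0 < e₁.val) (b f h : Bool) :
    (nextState Emax Dmax (e₂, x) a b f h).2 = (nextState Emax Dmax (e₁, x) a b f h).2 ∧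
      (nextState Emax Dmax (e₁, x) a b f h).1 ≤ (nextState Emax Dmax (e₂, x) a b f h).1 := by
  have he' : e₁.val ≤ e₂.val := he
  rcases ha with rfl | hpos
  · refine ⟨by simp [nextState], ?_⟩
    simp only [nextState, Bool.false_and, Fin.mk_le_mk]
    omega
  · have hpos₂ : 0 < e₂.val := hpos.trans_le he'
    refine ⟨by simp [nextState, hpos, hpos₂], ?_⟩
    simp only [nextState, hpos, hpos₂, decide_true, Bool.and_true, Fin.mk_le_mk]
    omega

lemma AntitoneInBattery.KV_le (hp : p ∈ Set.Icc 0 1) (hq : q ∈ Set.Icc 0 1)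
    (hβ : β ∈ Set.Icc 0 1) (hps : ps ∈ Set.Icc 0 1) {V : State Emax Dmax → ℝ}
    (hV : AntitoneInBattery V) {a : Bool} {e₁ e₂ : Fin (Emax + 1)} (x : Bool × Fin (Dmax + 1)) (he : e₁ ≤ e₂)
    (ha : a = false ∨ 0 < e₁.val) :
    KV Emax Dmax p q β ps a V (e₂, x) ≤ KV Emax Dmax p q β ps a V (e₁, x) := by
  refine KV_le_KV_of_forall_nextState_le hp hq hβ hps rfl fun b f h => ?_
  obtain ⟨hsnd, hfst⟩ := nextState_snd_eq_and_fst_mono x he ha b f h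
  rw [← Prod.mk.eta (p := nextState Emax Dmax (e₂, x) a b f h), hsnd]
  exact hV _ hfst

lemma Viter_antitoneInBattery (hp : p ∈ Set.Icc 0 1) (hq : q ∈ Set.Icc 0 1)
    (hβ : β ∈ Set.Icc 0 1) (hps : ps ∈ Set.Icc 0 1) (t : ℕ) :
    AntitoneInBattery (Viter Emax Dmax p q β ps t) := by
  induction t with
  | zero => exact fun _ _ _ _ => le_rfl
  | succ t ih =>
    intro e₁ e₂ x he
    have hidle := ih.KV_le hp hq hβ hps x he (a := false) (Or.inl rfl)
    simp only [Viter]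
    refine add_le_add le_rfl (le_min (min_le_left _ _ |>.trans hidle) ?_)
    rcases Nat.eq_zero_or_pos e₁.val with h0 | hpos
    · rw [KV_true_eq_KV_false_of_fst_eq_zero _ (e₁, x) h0]
      exact min_le_left _ _ |>.trans hidle
    · exact min_le_right _ _ |>.trans (ih.KV_le hp hq hβ hps x he (Or.inr hpos))

lemma nextState_true_snd_eq_of_VIA_zero (s : State Emax Dmax) (hs : s.2.2.val = 0)
    (b f h : Bool) :
    (nextState Emax Dmax s true b f h).2 = (nextState Emax Dmax s false b f h).2 := by
  cases f <;> cases h <;> simp [nextState, hs]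

lemma nextState_true_fst_le (s : State Emax Dmax) (b f h : Bool) :
    (nextState Emax Dmax s true b f h).1 ≤ (nextState Emax Dmax s false b f h).1 := by
  simp only [nextState, Bool.true_and, Bool.false_and, Bool.false_eq_true, ↓reduceIte,
    Fin.mk_le_mk]
  split_ifs <;> omega

/-- **Idling is optimal at VIA = 0.**  For every value-iteration step `t`,
battery level `e ≤ E_max`, and source state `X`, one has
`ΔV_t(e,X,0) ≥ 0`: when the VIA equals `0`, not transmitting is an optimal
action. -/
theorem advantage_nonneg_at_zero_VIA (Emax Dmax : ℕ)
    (p q β ps : ℝ) (hp0 : 0 ≤ p) (hp1 : p ≤ 1) (hq0 : 0 ≤ q) (hq1 : q ≤ 1)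
    (hβ0 : 0 ≤ β) (hβ1 : β ≤ 1) (hps0 : 0 ≤ ps) (hps1 : ps ≤ 1)
    (t : ℕ) (e : ℕ) (he : e ≤ Emax) (X : Bool) :
    0 ≤ dV Emax Dmax p q β ps t (⟨e, by omega⟩, X, ⟨0, by omega⟩) := by
  set s : State Emax Dmax := (⟨e, by omega⟩, X, ⟨0, by omega⟩)
  have hV := Viter_antitoneInBattery (Emax := Emax) (Dmax := Dmax) ⟨hp0, hp1⟩ ⟨hq0, hq1⟩
    ⟨hβ0, hβ1⟩ ⟨hps0, hps1⟩ t
  rw [dV, sub_nonneg]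
  refine KV_le_KV_of_forall_nextState_le ⟨hp0, hp1⟩ ⟨hq0, hq1⟩ ⟨hβ0, hβ1⟩ ⟨hps0, hps1⟩ rfl
    fun b f h => ?_
  rw [← Prod.mk.eta (p := nextState Emax Dmax s true b f h),
    nextState_true_snd_eq_of_VIA_zero s rfl]
  exact hV _ (nextState_true_fst_le s b f h)

end VIA
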